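/- arXiv:2205.03328 — 4 statements merged into one kernel-verified Lean document; each statement's English description precedes it below -/
import Mathlib

section
/- Define f(n0) = n0·F(n, n0). Let m and n be positive integers with m ≤ n, and let n_1, ..., n_m be positive integers with n_1 + ... + n_m = n. Then Σ_{i=1}^{m} f(n_i) ≤ (m−1)·f(1) + f(n−m+1). That is, among all ways of dismembering a ring of n nodes into m disjoint mini-rings by m jammers, the most harmful configuration isolates m−1 single nodes and leaves one component of n−m+1 nodes. -/
/-!
The sum of ages `f` of a mini-ring has nondecreasing increments beyond size one:
`f (k + 1) - f k` is `λs/λ` times a partial sum of positive products, one more term for each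
step. For such a discretely convex `f`, moving all but one node of a component into another
never decreases `f a + f b`, i.e. `f a + f b ≤ f 1 + f (a + b - 1)`; repeating this collapses
any partition of `n` into `m` parts onto the partition `1, …, 1, n - m + 1`.
-/

open Finset

/-- Closed-form stationary version age of a single node in a mini-ring of `n0` gossiping
nodes cut out of a ring of `n` nodes (source rate `lamS`, per-node update rate `lam/n`,
per-link rate `lam/2`). -/
noncomputable def ringNodeAge (lamS lam : ℝ) (n n0 : ℕ) : ℝ :=
  (lamS / lam) *
    ((∑ j ∈ Finset.Icc 1 (n0 - 1), ∏ k ∈ Finset.Icc 1 j, 1 / ((k : ℝ) / (n : ℝ) + 1))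
      + ((n : ℝ) / (n0 : ℝ)) * ∏ k ∈ Finset.Icc 1 (n0 - 1), 1 / ((k : ℝ) / (n : ℝ) + 1))

/-- Sum of version ages over the `n0` nodes of such a mini-ring. -/
noncomputable def ringSumAge (lamS lam : ℝ) (n n0 : ℕ) : ℝ :=
  (n0 : ℝ) * ringNodeAge lamS lam n n0

section DiscreteConvex

variable {f : ℕ → ℝ} (hf : Monotone fun k => f (k + 2) - f (k + 1))
include hf

theorem add_le_one_add_of_monotone_increment (a b : ℕ) :
    f (a + 1) + f (b + 1) ≤ f 1 + f (a + b + 1) := by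
  induction b with
  | zero => simp [add_comm]
  | succ b ih =>
    have hstep : f (b + 2) - f (b + 1) ≤ f (a + b + 2) - f (a + b + 1) := hf (by omega)
    rw [show a + (b + 1) + 1 = a + b + 2 by ring]
    linarith

theorem sum_le_of_monotone_increment (m : ℕ) (a : Fin (m + 1) → ℕ) (ha : ∀ i, 0 < a i) :
    ∑ i, f (a i) ≤ m * f 1 + f (∑ i, a i - m) := by
  induction m with
  | zero => simp
  | succ m ih =>
    rw [Fin.sum_univ_succ, Fin.sum_univ_succ (f := a)]
    set T := ∑ i : Fin (m + 1), a i.succ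
    have hT : m + 1 ≤ T :=
      (by simp : m + 1 = ∑ _i : Fin (m + 1), 1).trans_le (sum_le_sum fun i _ => ha i.succ)
    have hrest := ih (fun i => a i.succ) fun i => ha i.succ
    obtain ⟨c, hc⟩ : ∃ c, a 0 = c + 1 := ⟨a 0 - 1, by have := ha 0; omega⟩
    obtain ⟨b, hb⟩ : ∃ b, T - m = b + 1 := ⟨T - m - 1, by omega⟩
    have hmerge := add_le_one_add_of_monotone_increment hf c b
    rw [hb] at hrest
    rw [hc, show c + 1 + T - (m + 1) = c + b + 1 by omega]
    push_cast
    linarith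

end DiscreteConvex

noncomputable def ringWeight (n j : ℕ) : ℝ :=
  ∏ k ∈ Icc 1 j, 1 / ((k : ℝ) / n + 1)

theorem ringNodeAge_eq (lamS lam : ℝ) (n n0 : ℕ) :
    ringNodeAge lamS lam n n0 = lamS / lam *
      (∑ j ∈ Icc 1 (n0 - 1), ringWeight n j + n / n0 * ringWeight n (n0 - 1)) :=
  rfl

theorem ringWeight_pos (n j : ℕ) : 0 < ringWeight n j :=
  prod_pos fun k _ => by positivity

theorem ringWeight_succ {n : ℕ} (hn : n ≠ 0) (j : ℕ) :
    ringWeight n j = ((j + 1 : ℝ) / n + 1) * ringWeight n (j + 1) := by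
  rw [ringWeight, ringWeight, prod_Icc_succ_top (by omega)]
  push_cast
  field_simp

/-- The boundary terms `n · W j` and `n · W (j + 1)` cancel up to `(j + 1) · W (j + 1)`,
because `n · W j = (n + j + 1) · W (j + 1)`. -/
theorem ringSumAge_succ_succ (lamS lam : ℝ) {n : ℕ} (hn : n ≠ 0) (j : ℕ) :
    ringSumAge lamS lam n (j + 2) =
      ringSumAge lamS lam n (j + 1) + lamS / lam * ∑ i ∈ Icc 1 (j + 1), ringWeight n i := by
  have hS : ∑ i ∈ Icc 1 (j + 1), ringWeight n i
      = ∑ i ∈ Icc 1 j, ringWeight n i + ringWeight n (j + 1) :=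
    sum_Icc_succ_top (by omega) _
  have hW := ringWeight_succ hn j
  simp only [ringSumAge, ringNodeAge_eq, show j + 2 - 1 = j + 1 by omega, Nat.add_sub_cancel]
  rw [hS, hW]
  push_cast
  field_simp
  ring

theorem monotone_ringSumAge_increment {lamS lam : ℝ} (hc : 0 ≤ lamS / lam) {n : ℕ}
    (hn : n ≠ 0) :
    Monotone fun k => ringSumAge lamS lam n (k + 2) - ringSumAge lamS lam n (k + 1) := by
  intro k l hkl
  simp only [ringSumAge_succ_succ lamS lam hn, add_sub_cancel_left]
  exact mul_le_mul_of_nonneg_left (sum_le_sum_of_subset_of_nonneg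
    (Icc_subset_Icc_right (by omega)) fun i _ _ => (ringWeight_pos n i).le) hc

theorem most_harmful_jammer_configuration_general
    (lamS lam : ℝ) (hlamS : 0 < lamS) (hlam : 0 < lam)
    (m n : ℕ) (hm : 0 < m) (hmn : m ≤ n)
    (a : Fin m → ℕ) (ha : ∀ i, 0 < a i) (hsum : ∑ i, a i = n) :
    ∑ i, ringSumAge lamS lam n (a i)
      ≤ ((m - 1 : ℕ) : ℝ) * ringSumAge lamS lam n 1 + ringSumAge lamS lam n (n - m + 1) := by
  obtain ⟨m, rfl⟩ : ∃ k, m = k + 1 := ⟨m - 1, by omega⟩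
  have hconvex := monotone_ringSumAge_increment (div_pos hlamS hlam).le (n := n) (by omega)
  have h := sum_le_of_monotone_increment hconvex m a ha
  rwa [hsum, show n - m = n - (m + 1) + 1 by omega] at h

/-- Among all ways of dismembering a ring of `n` nodes into `m` disjoint mini-rings of sizes
`n_1 + ⋯ + n_m = n`, the most harmful configuration isolates `m - 1` single nodes and leaves
one component of `n - m + 1` nodes: `Σ_i f(n_i) ≤ (m-1)·f(1) + f(n-m+1)`. -/
theorem most_harmful_jammer_configuration
    (lamS lam : ℝ) (hlamS : 0 < lamS) (hlam : 0 < lam)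
    (m n : ℕ) (hm : 0 < m) (hn : 0 < n) (hmn : m ≤ n)
    (a : Fin m → ℕ) (ha : ∀ i, 0 < a i) (hsum : ∑ i, a i = n) :
    ∑ i, ringSumAge lamS lam n (a i)
      ≤ ((m - 1 : ℕ) : ℝ) * ringSumAge lamS lam n 1 + ringSumAge lamS lam n (n - m + 1) :=
  most_harmful_jammer_configuration_general lamS lam hlamS hlam m n hm hmn a ha hsum
end

section
/- Define f(n0) = n0·F(n, n0). Let m and n be positive integers with m dividing n, and let n_1, ..., n_m be positive integers with n_1 + ... + n_m = n. Then Σ_{i=1}^{m} f(n_i) ≥ m·f(n/m). That is, among all ways of dismembering a ring of n nodes into m disjoint mini-rings by m jammers, the least harmful configuration is the equidistant placement creating m equal mini-rings of n/m nodes each. -/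
/-!
The sum of ages `f(t) = t · F(n, t)` has forward differences `f(t+1) - f(t) = (λs/λ) · S(t)` for
`t ≥ 1`, where `S(t) = Σ_{j=1}^{t} Π_{k=1}^{j} 1/(k/n + 1)` is increasing. So `f` is discretely
convex on the positive integers, lies above its tangent `f(q) + (x - q)(f(q+1) - f(q))` there,
and summing these tangent bounds at `q = n/m` over the sizes `n_i` gives the claim, since
`Σ (n_i - q) = 0`.
-/

open Finset

section DiscreteConvexity

variable {g : ℕ → ℝ} {p : ℕ}

theorem add_mul_sub_le_of_monotoneOn_sub (hg : MonotoneOn (fun k => g (k + 1) - g k) (Set.Ici p))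
    {q x : ℕ} (hq : p ≤ q) (hx : p ≤ x) :
    g q + ((x : ℝ) - q) * (g (q + 1) - g q) ≤ g x := by
  rcases le_total q x with hqx | hxq
  · obtain ⟨d, rfl⟩ := Nat.exists_eq_add_of_le hqx
    have hslope : ∀ t ∈ range d, g (q + 1) - g q ≤ g (q + t + 1) - g (q + t) := fun t _ =>
      hg (Set.mem_Ici.2 hq) (Set.mem_Ici.2 (by omega)) (by omega)
    have htele := sum_range_sub (fun t => g (q + t)) d
    have := card_nsmul_le_sum _ _ _ hslope
    simp only [card_range, nsmul_eq_mul, add_assoc, add_zero] at this htele ⊢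
    push_cast
    linarith
  · obtain ⟨d, rfl⟩ := Nat.exists_eq_add_of_le hxq
    have hslope : ∀ t ∈ range d, g (x + t + 1) - g (x + t) ≤ g (x + d + 1) - g (x + d) :=
      fun t ht => hg (Set.mem_Ici.2 (by omega)) (Set.mem_Ici.2 (by omega))
        (by simp only [mem_range] at ht; omega)
    have htele := sum_range_sub (fun t => g (x + t)) d
    have := sum_le_card_nsmul _ _ _ hslope
    simp only [card_range, nsmul_eq_mul, add_assoc, add_zero] at this htele ⊢
    push_cast
    linarith

theorem card_mul_le_sum_of_monotoneOn_sub {ι : Type*} (s : Finset ι)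
    (hg : MonotoneOn (fun k => g (k + 1) - g k) (Set.Ici p)) {q : ℕ} (hq : p ≤ q)
    {x : ι → ℕ} (hx : ∀ i ∈ s, p ≤ x i) (hsum : ∑ i ∈ s, x i = #s * q) :
    #s * g q ≤ ∑ i ∈ s, g (x i) := by
  have hdev : ∑ i ∈ s, ((x i : ℝ) - q) = 0 := by
    rw [sum_sub_distrib, ← Nat.cast_sum, hsum, sum_const, nsmul_eq_mul]
    push_cast
    ring
  calc (#s : ℝ) * g q = ∑ i ∈ s, (g q + ((x i : ℝ) - q) * (g (q + 1) - g q)) := by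
        rw [sum_add_distrib, ← sum_mul, hdev, zero_mul, add_zero, sum_const, nsmul_eq_mul]
    _ ≤ ∑ i ∈ s, g (x i) :=
        sum_le_sum fun i hi => add_mul_sub_le_of_monotoneOn_sub hg hq (hx i hi)

end DiscreteConvexity

noncomputable def ringPartialSum (n t : ℕ) : ℝ :=
  ∑ j ∈ Icc 1 t, ∏ k ∈ Icc 1 j, 1 / ((k : ℝ) / (n : ℝ) + 1)

theorem ringPartialSum_mono (n : ℕ) : Monotone (ringPartialSum n) := fun _ _ h =>
  sum_le_sum_of_subset_of_nonneg (Icc_subset_Icc_right h) fun _ _ _ => by positivity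

/-- The key identity is `(t + n) · Π_{k ≤ t} 1/(k/n + 1) = n · Π_{k < t} 1/(k/n + 1)`. -/
theorem ringSumAge_succ_sub (lamS lam : ℝ) {n : ℕ} (hn : n ≠ 0) {t : ℕ} (ht : t ≠ 0) :
    ringSumAge lamS lam n (t + 1) - ringSumAge lamS lam n t = lamS / lam * ringPartialSum n t := by
  obtain ⟨s, rfl⟩ := Nat.exists_eq_succ_of_ne_zero ht
  unfold ringSumAge ringNodeAge ringPartialSum
  simp only [Nat.succ_eq_add_one, Nat.add_sub_cancel]
  rw [sum_Icc_succ_top (by omega : 1 ≤ s + 1), prod_Icc_succ_top (by omega : 1 ≤ s + 1)]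
  have hnR : (n : ℝ) ≠ 0 := Nat.cast_ne_zero.2 hn
  have hden : ((s + 1 : ℕ) : ℝ) / n + 1 ≠ 0 := by positivity
  push_cast at hden ⊢
  field_simp
  ring

theorem ringSumAge_sub_monotoneOn {lamS lam : ℝ} (hc : 0 ≤ lamS / lam) {n : ℕ} (hn : n ≠ 0) :
    MonotoneOn (fun t => ringSumAge lamS lam n (t + 1) - ringSumAge lamS lam n t)
      (Set.Ici 1) := by
  intro t ht u hu htu
  simp only [ringSumAge_succ_sub lamS lam hn (Nat.one_le_iff_ne_zero.1 ht),
    ringSumAge_succ_sub lamS lam hn (Nat.one_le_iff_ne_zero.1 hu)]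
  exact mul_le_mul_of_nonneg_left (ringPartialSum_mono n htu) hc

theorem least_harmful_jammer_configuration_general
    (lamS lam : ℝ) (hlamS : 0 < lamS) (hlam : 0 < lam)
    (m n : ℕ) (hn : 0 < n) (hdvd : m ∣ n)
    (a : Fin m → ℕ) (ha : ∀ i, 0 < a i) (hsum : ∑ i, a i = n) :
    (m : ℝ) * ringSumAge lamS lam n (n / m) ≤ ∑ i, ringSumAge lamS lam n (a i) := by
  have hmq : m * (n / m) = n := Nat.mul_div_cancel' hdvd
  have hq : 1 ≤ n / m := Nat.pos_of_ne_zero fun h => by rw [h, mul_zero] at hmq; omega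
  have hconvex := ringSumAge_sub_monotoneOn (div_pos hlamS hlam).le hn.ne'
  simpa using card_mul_le_sum_of_monotoneOn_sub univ hconvex hq (fun i _ => ha i)
    (by rw [hsum, card_univ, Fintype.card_fin, hmq])

/-- Among all ways of dismembering a ring of `n` nodes into `m` disjoint mini-rings of sizes
`n_1 + ⋯ + n_m = n` (with `m ∣ n`), the least harmful configuration is the equidistant
placement creating `m` equal mini-rings of `n/m` nodes each: `Σ_i f(n_i) ≥ m·f(n/m)`. -/
theorem least_harmful_jammer_configuration
    (lamS lam : ℝ) (hlamS : 0 < lamS) (hlam : 0 < lam)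
    (m n : ℕ) (hm : 0 < m) (hn : 0 < n) (hdvd : m ∣ n)
    (a : Fin m → ℕ) (ha : ∀ i, 0 < a i) (hsum : ∑ i, a i = n) :
    (m : ℝ) * ringSumAge lamS lam n (n / m) ≤ ∑ i, ringSumAge lamS lam n (a i) :=
  least_harmful_jammer_configuration_general lamS lam hlamS hlam m n hn hdvd a ha hsum
end

section
/- For all positive integers n0 and n with n0 ≤ n and all positive reals λs, λ, one has F(n, n0) ≥ (λs/λ)·(n/n0)·exp(−n0²/n). -/
/-!
Since `1 + x ≤ exp x`, each factor `1 / (k/n + 1)` of the product in `F(n, n0)` is at least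
`exp (-k/n)`, so the product is at least `exp (-∑ k/n) ≥ exp (-n0²/n)`. The sum in front of it is
nonnegative, which leaves `(n/n0)·exp(-n0²/n)` as a lower bound for the bracket.
-/

open Finset

theorem Real.exp_neg_le_inv_add_one {x : ℝ} (hx : -1 < x) : Real.exp (-x) ≤ (x + 1)⁻¹ := by
  rw [Real.exp_neg]
  exact inv_anti₀ (by linarith) (Real.add_one_le_exp x)

theorem Real.exp_neg_sum_le_prod_inv_add_one {ι : Type*} (s : Finset ι) (f : ι → ℝ)
    (hf : ∀ i ∈ s, -1 < f i) : Real.exp (-∑ i ∈ s, f i) ≤ ∏ i ∈ s, (f i + 1)⁻¹ := by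
  rw [← sum_neg_distrib, Real.exp_sum]
  exact prod_le_prod (fun _ _ => (Real.exp_pos _).le)
    fun i hi => Real.exp_neg_le_inv_add_one (hf i hi)

theorem Nat.sum_Icc_one_sub_one_le_sq (m : ℕ) : ∑ k ∈ Icc 1 (m - 1), k ≤ m ^ 2 := by
  calc ∑ k ∈ Icc 1 (m - 1), k ≤ #(Icc 1 (m - 1)) • m :=
        sum_le_card_nsmul _ _ _ fun k hk => by grind
    _ ≤ m ^ 2 := by rw [Nat.card_Icc, smul_eq_mul, sq]; gcongr; omega

theorem exp_neg_sq_div_le_prod_Icc (n m : ℕ) :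
    Real.exp (-(m : ℝ) ^ 2 / n) ≤ ∏ k ∈ Icc 1 (m - 1), 1 / ((k : ℝ) / n + 1) := by
  have hsum : ∑ k ∈ Icc 1 (m - 1), (k : ℝ) / n ≤ (m : ℝ) ^ 2 / n := by
    rw [← sum_div]
    gcongr
    rw [← Nat.cast_sum]
    exact_mod_cast Nat.sum_Icc_one_sub_one_le_sq m
  calc Real.exp (-(m : ℝ) ^ 2 / n) ≤ Real.exp (-∑ k ∈ Icc 1 (m - 1), (k : ℝ) / n) := by
        rw [neg_div]; gcongr
    _ ≤ ∏ k ∈ Icc 1 (m - 1), 1 / ((k : ℝ) / n + 1) := by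
        simp only [one_div]
        exact Real.exp_neg_sum_le_prod_inv_add_one _ _ fun k _ => by
          have : (0 : ℝ) ≤ k / n := by positivity
          linarith

theorem ringNodeAge_lower_bound_general
    (n n0 : ℕ) (lamS lam : ℝ)
    (hlamS : 0 < lamS) (hlam : 0 < lam) :
    (lamS / lam) * ((n : ℝ) / (n0 : ℝ)) * Real.exp (-(n0 : ℝ) ^ 2 / (n : ℝ))
      ≤ ringNodeAge lamS lam n n0 := by
  have hsum_nonneg :
      0 ≤ ∑ j ∈ Icc 1 (n0 - 1), ∏ k ∈ Icc 1 j, 1 / ((k : ℝ) / (n : ℝ) + 1) :=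
    sum_nonneg fun _ _ => prod_nonneg fun _ _ => by positivity
  have hprod := mul_le_mul_of_nonneg_left (exp_neg_sq_div_le_prod_Icc n n0)
    (by positivity : (0 : ℝ) ≤ n / n0)
  rw [ringNodeAge, mul_assoc]
  exact mul_le_mul_of_nonneg_left (by linarith) (div_nonneg hlamS.le hlam.le)

/-- For all positive integers `n0 ≤ n` and positive reals `lamS, lam`,
`F(n, n0) ≥ (lamS/lam)·(n/n0)·exp(-n0²/n)`. -/
theorem ringNodeAge_lower_bound
    (n n0 : ℕ) (lamS lam : ℝ)
    (hn0 : 0 < n0) (hn0n : n0 ≤ n) (hlamS : 0 < lamS) (hlam : 0 < lam) :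
    (lamS / lam) * ((n : ℝ) / (n0 : ℝ)) * Real.exp (-(n0 : ℝ) ^ 2 / (n : ℝ))
      ≤ ringNodeAge lamS lam n n0 :=
  ringNodeAge_lower_bound_general n n0 lamS lam hlamS hlam
end

section
/- Fix reals c > 0, λs > 0, λ > 0 and α ∈ [1/2, 1]. Then there exist a constant C > 0 and an integer N such that for every integer n ≥ N, setting n0 = ⌈n^{1−α}/c⌉ (the size of each mini-ring when ñ = c·n^α jammers are placed equidistantly on a ring of n nodes), one has F(n, n0) ≥ C·n^α. That is, with Θ(n^α) equidistant jammers and α ≥ 1/2, the version age of every node is Ω(n^α). -/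
open Finset

/-!
The term `(n / n0) · ∏_{k < n0} 1/(k/n + 1)` of the age alone does the job. Since
`1/(1 + t) ≥ e^{-t}`, the product is at least `e^{-n0²/n}`, which stays above `e^{-1/c²}`
because `n0 ≈ n^{1-α}/c` and `α ≥ 1/2`; and `n / n0 ≥ c/(1+c) · n^α` because `α ≤ 1`
keeps `n^{1-α} ≥ 1`.
-/

open Real

lemma exp_neg_le_one_div_add_one {t : ℝ} (ht : 0 ≤ t) : exp (-t) ≤ 1 / (t + 1) := by
  rw [exp_neg, ← one_div]
  exact one_div_le_one_div_of_le (by positivity) (add_one_le_exp t)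

lemma exp_neg_sq_div_le_prod {a : ℝ} (ha : 0 ≤ a) (m : ℕ) :
    exp (-((m : ℝ) ^ 2 / a)) ≤ ∏ k ∈ Icc 1 m, 1 / ((k : ℝ) / a + 1) :=
  calc exp (-((m : ℝ) ^ 2 / a)) = ∏ _k ∈ Icc 1 m, exp (-((m : ℝ) / a)) := by
        rw [prod_const, Nat.card_Icc, Nat.add_sub_cancel, ← exp_nat_mul]
        ring_nf
    _ ≤ ∏ k ∈ Icc 1 m, 1 / ((k : ℝ) / a + 1) := by
        refine prod_le_prod (fun _ _ ↦ (exp_pos _).le) fun k hk ↦ ?_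
        have hkm : (k : ℝ) ≤ m := by exact_mod_cast (mem_Icc.mp hk).2
        calc exp (-((m : ℝ) / a)) ≤ exp (-((k : ℝ) / a)) := by gcongr
          _ ≤ 1 / ((k : ℝ) / a + 1) := exp_neg_le_one_div_add_one (by positivity)

lemma mul_div_mul_exp_le_ringNodeAge {lamS lam : ℝ} (hlamS : 0 ≤ lamS) (hlam : 0 ≤ lam)
    (n n0 : ℕ) :
    lamS / lam * (n / n0) * exp (-(((n0 - 1 : ℕ) : ℝ) ^ 2 / n)) ≤ ringNodeAge lamS lam n n0 := by
  have hsum : 0 ≤ ∑ j ∈ Icc 1 (n0 - 1), ∏ k ∈ Icc 1 j, 1 / ((k : ℝ) / (n : ℝ) + 1) :=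
    sum_nonneg fun _ _ ↦ prod_nonneg fun _ _ ↦ by positivity
  have hprod := exp_neg_sq_div_le_prod (Nat.cast_nonneg n) (n0 - 1)
  rw [ringNodeAge, mul_assoc]
  refine mul_le_mul_of_nonneg_left ?_ (div_nonneg hlamS hlam)
  have := mul_le_mul_of_nonneg_left hprod (by positivity : (0 : ℝ) ≤ n / n0)
  linarith

/-- The paper's `n0`: mini-ring size for `c·n^α` equidistant jammers on a ring of `n` nodes. -/
noncomputable def miniRingSize (c α : ℝ) (n : ℕ) : ℕ := ⌈(n : ℝ) ^ (1 - α) / c⌉₊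

lemma natCast_ceil_sub_one_le {x : ℝ} (hx : 0 ≤ x) : ((⌈x⌉₊ - 1 : ℕ) : ℝ) ≤ x := by
  have := Nat.ceil_lt_add_one hx
  rcases Nat.eq_zero_or_pos ⌈x⌉₊ with h | h
  · simp [h, hx]
  · rw [Nat.cast_sub h]; push_cast; linarith

lemma sq_miniRingSize_sub_one_div_le {c α : ℝ} (hc : 0 < c) (hα : 1 / 2 ≤ α) (n : ℕ) :
    (((miniRingSize c α n - 1 : ℕ) : ℝ)) ^ 2 / n ≤ 1 / c ^ 2 := by
  rcases Nat.eq_zero_or_pos n with rfl | hn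
  · simp [sq_nonneg]
  have hn1 : (1 : ℝ) ≤ n := by exact_mod_cast hn
  set x := (n : ℝ) ^ (1 - α) / c
  have hceil : (((⌈x⌉₊ - 1 : ℕ)) : ℝ) ≤ x := natCast_ceil_sub_one_le (by positivity)
  rw [div_le_div_iff₀ (by positivity) (by positivity), one_mul]
  calc (((⌈x⌉₊ - 1 : ℕ)) : ℝ) ^ 2 * c ^ 2 ≤ x ^ 2 * c ^ 2 := by gcongr
    _ = (n : ℝ) ^ ((1 - α) * 2) := by
      rw [rpow_mul (Nat.cast_nonneg n), rpow_two, div_pow]; field_simp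
    _ ≤ (n : ℝ) ^ (1 : ℝ) := rpow_le_rpow_of_exponent_le hn1 (by linarith)
    _ = n := rpow_one _

lemma mul_rpow_le_div_miniRingSize {c α : ℝ} (hc : 0 < c) (hα : α ≤ 1) {n : ℕ} (hn : 1 ≤ n) :
    c / (1 + c) * (n : ℝ) ^ α ≤ n / miniRingSize c α n := by
  have hn1 : (1 : ℝ) ≤ n := by exact_mod_cast hn
  set B := (n : ℝ) ^ (1 - α)
  have hB : 1 ≤ B := one_le_rpow hn1 (by linarith)
  have hAB : (n : ℝ) ^ α * B = n := by
    rw [← rpow_add (by positivity)]; simp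
  have hsize : (miniRingSize c α n : ℝ) ≤ B * (1 + c) / c := by
    calc (miniRingSize c α n : ℝ) ≤ B / c + 1 := (Nat.ceil_lt_add_one (by positivity)).le
      _ ≤ B / c + B := by gcongr
      _ = B * (1 + c) / c := by field_simp
  have hpos : (0 : ℝ) < miniRingSize c α n := Nat.cast_pos.mpr (Nat.ceil_pos.mpr (by positivity))
  rw [le_div_iff₀ hpos]
  calc c / (1 + c) * (n : ℝ) ^ α * miniRingSize c α n
      ≤ c / (1 + c) * (n : ℝ) ^ α * (B * (1 + c) / c) := by gcongr
    _ = (n : ℝ) ^ α * B := by field_simp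
    _ = n := hAB

/-- With `ñ = c·n^α` equidistant jammers and `α ∈ [1/2, 1]`, each mini-ring has
`n0 = ⌈n^(1-α)/c⌉` nodes and the version age of every node is `Ω(n^α)`:
`F(n, n0) ≥ C·n^α` for large `n`. -/
theorem equidistant_jammers_age_lower_bound_large_alpha
    (c lamS lam α : ℝ) (hc : 0 < c) (hlamS : 0 < lamS) (hlam : 0 < lam)
    (hα1 : 1 / 2 ≤ α) (hα2 : α ≤ 1) :
    ∃ C : ℝ, 0 < C ∧ ∃ N : ℕ, ∀ n : ℕ, N ≤ n →
      C * (n : ℝ) ^ α ≤ ringNodeAge lamS lam n ⌈(n : ℝ) ^ (1 - α) / c⌉₊ := by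
  refine ⟨lamS / lam * (c / (1 + c)) * exp (-(1 / c ^ 2)), by positivity, 1, fun n hn ↦ ?_⟩
  have hratio := mul_rpow_le_div_miniRingSize hc hα2 hn
  have hexp := sq_miniRingSize_sub_one_div_le hc hα1 n
  calc lamS / lam * (c / (1 + c)) * exp (-(1 / c ^ 2)) * (n : ℝ) ^ α
      = lamS / lam * (c / (1 + c) * (n : ℝ) ^ α) * exp (-(1 / c ^ 2)) := by ring
    _ ≤ lamS / lam * (n / miniRingSize c α n)
          * exp (-(((miniRingSize c α n - 1 : ℕ) : ℝ) ^ 2 / n)) := by gcongr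
    _ ≤ ringNodeAge lamS lam n (miniRingSize c α n) :=
      mul_div_mul_exp_le_ringNodeAge hlamS.le hlam.le n _
end
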